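/- Let ω = e^{2πi/3}, Λ = ℤω ⊕ ℤ, Λ* = (4πi/√3)Λ, ⟨z,w⟩ := Re(z·conj(w)), θ as below, z(k) := √3·k/(4πi), and F_k(z) := e^{(i/2)(z−conj(z))k}·θ(z−z(k))/θ(z). Fix p ∈ Λ* and write z(p) = m + nω with m,n ∈ ℤ. Then for every k ∈ ℂ with z(k) ∉ Λ, the quantity e_p(k) := θ(z(k))/θ(z(k+p)) satisfies e_p(k) = (−1)^{m+n}·e^{πin²ω + 2πin·z(k)}, and for every z ∈ ℂ∖Λ one has F_{k+p}(z) = e_p(k)^{−1}·e^{−i⟨z,p⟩}·F_k(z). -/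

import Mathlib

open Complex

noncomputable section

/-- `ω = e^{2πi/3}`. -/
def ω : ℂ := Complex.exp (2 * (Real.pi : ℂ) * Complex.I / 3)

/-- The hexagonal lattice `Λ = ℤω ⊕ ℤ`. -/
def inΛ (γ : ℂ) : Prop := ∃ m n : ℤ, γ = (m : ℂ) * ω + (n : ℂ)

/-- The dual lattice `Λ* = (4πi/√3) Λ`. -/
def inΛstar (p : ℂ) : Prop :=
  ∃ γ : ℂ, inΛ γ ∧ p = (4 * (Real.pi : ℂ) * Complex.I / (Real.sqrt 3 : ℂ)) * γ

/-- The pairing `⟨z,w⟩ = Re (z ⬝ conj w)`. -/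
def pairing (z w : ℂ) : ℝ := (z * (starRingEnd ℂ) w).re

/-- The Jacobi theta function `θ₁(z|ω)`. -/
def θ (z : ℂ) : ℂ :=
  -∑' n : ℤ, Complex.exp ((Real.pi : ℂ) * Complex.I * ((n : ℂ) + 1/2)^2 * ω
      + 2 * (Real.pi : ℂ) * Complex.I * ((n : ℂ) + 1/2) * (z + 1/2))

/-- `z(k) = √3 k/(4πi)`. -/
def zmap (k : ℂ) : ℂ := (Real.sqrt 3 : ℂ) * k / (4 * (Real.pi : ℂ) * Complex.I)

/-- `F_k(z) = e^{(i/2)(z - z̄)k} θ(z - z(k))/θ(z)`. -/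
def F (k z : ℂ) : ℂ :=
  Complex.exp ((Complex.I / 2) * (z - (starRingEnd ℂ) z) * k) * θ (z - zmap k) / θ z

/-! Shifting the summation index of the theta series by `n` gives `θ z = e(z) θ(z + m + nω)`
with `e(z) = (-1)^(m+n) e^{πin²ω + 2πinz}`. At `z = z(k)` this is the formula for `e_p(k)`, once
`θ(z(k)) ≠ 0`; at `z - z(k+p)` it gives the transformation of `F`, the leftover exponential being
`e^{-i⟨z,p⟩}` because `Re p = -2πn`.

`θ` does not vanish off `Λ`: translate by a multiple of `ω` into the strip `|Im w| ≤ √3/4` and use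
`θ(w) = 2 ∑_{n ≥ 0} (-1)^n q^{(n+1/2)²} sin((2n+1)πw)`, `q = e^{πiω}`. Since
`|sin((2n+1)x)| ≤ (2n+1) e^{2n|Im x|} |sin x|`, the terms with `n ≥ 1` are dominated by
`(3e^{-2})^n` times the term `n = 0`, and `3e^{-2} < 1/2`; the term `n = 0` vanishes only at the
integers. -/

open scoped Real ComplexConjugate

lemma ω_eq : ω = -1 / 2 + (√3 / 2 : ℝ) * I := by
  have h : (2 * π / 3 : ℝ) = π - π / 3 := by ring
  rw [ω, show 2 * (π : ℂ) * I / 3 = (2 * π / 3 : ℝ) * I by push_cast; ring, exp_mul_I,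
    ← ofReal_cos, ← ofReal_sin, h, Real.cos_pi_sub, Real.sin_pi_sub, Real.cos_pi_div_three,
    Real.sin_pi_div_three]
  push_cast
  ring

lemma ω_re : ω.re = -1 / 2 := by simp [ω_eq]

lemma ω_im : ω.im = √3 / 2 := by simp [ω_eq]

def thetaTerm (n : ℤ) (z : ℂ) : ℂ :=
  cexp (π * I * (n + 1 / 2) ^ 2 * ω + 2 * π * I * (n + 1 / 2) * (z + 1 / 2))

lemma theta_eq_neg_tsum (z : ℂ) : θ z = -∑' n : ℤ, thetaTerm n z := rfl

lemma summable_thetaTerm (z : ℂ) : Summable (thetaTerm · z) := by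
  have h := ((summable_jacobiTheta₂_term_iff (z + 1 / 2 + ω / 2) ω).mpr
    (by rw [ω_im]; positivity)).mul_left (cexp (π * I * ω / 4 + π * I * (z + 1 / 2)))
  refine h.congr fun n ↦ ?_
  rw [thetaTerm, jacobiTheta₂_term, ← Complex.exp_add]
  ring_nf

/-- If `z(p) = m + nω`, then `e_p(k) = latticeFactor m n (z(k))`. -/
def latticeFactor (m n : ℤ) (z : ℂ) : ℂ :=
  (-1) ^ (m + n) * cexp (π * I * n ^ 2 * ω + 2 * π * I * n * z)

lemma latticeFactor_ne_zero (m n : ℤ) (z : ℂ) : latticeFactor m n z ≠ 0 :=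
  mul_ne_zero (zpow_ne_zero _ (by norm_num)) (Complex.exp_ne_zero _)

lemma neg_one_zpow_eq_exp (k : ℤ) : (-1 : ℂ) ^ k = cexp (k * (π * I)) := by
  rw [exp_int_mul, exp_pi_mul_I]

lemma thetaTerm_add (j m n : ℤ) (z : ℂ) :
    thetaTerm (j + n) z = latticeFactor m n z * thetaTerm j (z + m + n * ω) := by
  rw [latticeFactor, neg_one_zpow_eq_exp, thetaTerm, thetaTerm, ← Complex.exp_add,
    ← Complex.exp_add]
  exact Complex.exp_eq_exp_iff_exists_int.mpr ⟨-(m * (j + 1)), by push_cast; ring⟩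

lemma theta_eq_latticeFactor_mul (m n : ℤ) (z : ℂ) :
    θ z = latticeFactor m n z * θ (z + m + n * ω) := by
  rw [theta_eq_neg_tsum, theta_eq_neg_tsum, mul_neg, ← tsum_mul_left,
    ← (Equiv.addRight n).tsum_eq]
  simp only [Equiv.coe_addRight, thetaTerm_add _ m n]

lemma latticeFactor_mul_latticeFactor (m n : ℤ) (u w : ℂ) :
    latticeFactor m n u * latticeFactor m n w = cexp (2 * π * I * n * (u + w + m + n * ω)) := by
  rw [latticeFactor, latticeFactor, mul_mul_mul_comm, ← mul_zpow, ← Complex.exp_add,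
    show (-1 : ℂ) * -1 = 1 by norm_num, one_zpow, one_mul]
  exact Complex.exp_eq_exp_iff_exists_int.mpr ⟨-(m * n), by push_cast; ring⟩

lemma norm_cos_le_exp_abs_im (w : ℂ) : ‖cos w‖ ≤ Real.exp |w.im| := by
  have hI : ‖cexp (w * I)‖ ≤ Real.exp |w.im| := by
    rw [Complex.norm_exp, Real.exp_le_exp, mul_I_re]
    exact neg_le_abs _
  have hnegI : ‖cexp (-w * I)‖ ≤ Real.exp |w.im| := by
    rw [Complex.norm_exp, Real.exp_le_exp, mul_I_re, neg_im, neg_neg]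
    exact le_abs_self _
  rw [Complex.cos, norm_div, Complex.norm_two]
  linarith [norm_add_le (cexp (w * I)) (cexp (-w * I))]

lemma norm_sin_two_mul_add_one_mul_le (n : ℕ) (w : ℂ) :
    ‖sin ((2 * n + 1) * w)‖ ≤ (2 * n + 1) * Real.exp (2 * n * |w.im|) * ‖sin w‖ := by
  induction n with
  | zero => simp
  | succ n ih =>
    have hrec : sin ((2 * (n + 1 : ℕ) + 1) * w)
        = sin ((2 * n + 1) * w) + 2 * sin w * cos ((2 * n + 2) * w) := by
      have h := Complex.sin_sub_sin ((2 * (n + 1 : ℕ) + 1) * w) ((2 * n + 1) * w)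
      push_cast at h ⊢
      rw [show ((2 * (n + 1 : ℂ) + 1) * w - (2 * n + 1) * w) / 2 = w by ring,
        show ((2 * (n + 1 : ℂ) + 1) * w + (2 * n + 1) * w) / 2 = (2 * n + 2) * w by ring] at h
      linear_combination h
    have hcos : ‖cos ((2 * n + 2) * w)‖ ≤ Real.exp ((2 * n + 2) * |w.im|) := by
      have him : ((2 * n + 2) * w).im = (2 * n + 2) * w.im := by simp
      refine (norm_cos_le_exp_abs_im _).trans_eq ?_
      rw [him, abs_mul, abs_of_nonneg (by positivity)]
    have hmono : Real.exp (2 * n * |w.im|) ≤ Real.exp ((2 * n + 2) * |w.im|) :=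
      Real.exp_le_exp.mpr (by nlinarith [abs_nonneg w.im])
    calc ‖sin ((2 * (n + 1 : ℕ) + 1) * w)‖
        ≤ ‖sin ((2 * n + 1) * w)‖ + 2 * ‖sin w‖ * ‖cos ((2 * n + 2) * w)‖ := by
          rw [hrec, ← Complex.norm_two, ← norm_mul, ← norm_mul]
          exact norm_add_le _ _
      _ ≤ (2 * n + 1) * Real.exp ((2 * n + 2) * |w.im|) * ‖sin w‖
          + 2 * ‖sin w‖ * Real.exp ((2 * n + 2) * |w.im|) := by
          gcongr
          exact ih.trans (by gcongr)
      _ = (2 * (n + 1 : ℕ) + 1) * Real.exp (2 * (n + 1 : ℕ) * |w.im|) * ‖sin w‖ := by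
          push_cast
          ring_nf

lemma tsum_ne_zero_of_norm_le_geometric {E : Type*} [NormedAddCommGroup E] [CompleteSpace E]
    {v : ℕ → E} {r : ℝ} (hr₀ : 0 ≤ r) (hr : r < 1 / 2) (hv : ∀ n, ‖v n‖ ≤ ‖v 0‖ * r ^ n)
    (h₀ : v 0 ≠ 0) : ∑' n, v n ≠ 0 := by
  have hgeom := hasSum_geometric_of_lt_one hr₀ (by linarith)
  have htail : ‖∑' n, v (n + 1)‖ ≤ ‖v 0‖ * r * (1 - r)⁻¹ :=
    tsum_of_norm_bounded (hgeom.mul_left (‖v 0‖ * r)) fun n ↦ (hv (n + 1)).trans_eq (by ring)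
  have hlt : ‖v 0‖ * r * (1 - r)⁻¹ < ‖v 0‖ := by
    rw [mul_assoc, ← div_eq_mul_inv]
    refine mul_lt_of_lt_one_right (norm_pos_iff.mpr h₀) ?_
    rw [div_lt_one (by linarith)]
    linarith
  rw [((hgeom.mul_left ‖v 0‖).summable.of_norm_bounded hv).tsum_eq_zero_add]
  intro h
  rw [add_eq_zero_iff_eq_neg] at h
  have hnorm : ‖v 0‖ = ‖∑' n, v (n + 1)‖ := by rw [h, norm_neg]
  linarith

def thetaSinTerm (n : ℕ) (w : ℂ) : ℂ :=
  2 * (-1) ^ n * cexp (π * I * (n + 1 / 2) ^ 2 * ω) * sin ((2 * n + 1) * π * w)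

lemma thetaTerm_add_thetaTerm_neg (n : ℕ) (w : ℂ) :
    thetaTerm n w + thetaTerm (-(n + 1)) w = -thetaSinTerm n w := by
  set a : ℂ := π * I * (n + 1 / 2) ^ 2 * ω
  set y : ℂ := (2 * n + 1) * π * w
  have hpos : thetaTerm n w = cexp a * cexp ((y + n * π + π / 2) * I) := by
    rw [thetaTerm, ← Complex.exp_add]
    congr 1
    simp only [a, y]
    push_cast
    ring
  have hneg : thetaTerm (-(n + 1)) w = cexp a * cexp (-(y + n * π + π / 2) * I) := by
    rw [thetaTerm, ← Complex.exp_add]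
    congr 1
    simp only [a, y]
    push_cast
    ring
  rw [hpos, hneg, ← mul_add, ← Complex.two_cos, Complex.cos_add_pi_div_two,
    Complex.sin_antiperiodic.add_nat_mul_eq, thetaSinTerm]
  ring

lemma theta_eq_tsum_thetaSinTerm (w : ℂ) : θ w = ∑' n : ℕ, thetaSinTerm n w := by
  rw [theta_eq_neg_tsum, ← tsum_nat_add_neg_add_one (summable_thetaTerm w), ← tsum_neg]
  simp only [thetaTerm_add_thetaTerm_neg, neg_neg]

lemma norm_thetaSinTerm (n : ℕ) (w : ℂ) :
    ‖thetaSinTerm n w‖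
      = 2 * Real.exp (-(π * √3 / 2) * (n + 1 / 2) ^ 2) * ‖sin ((2 * n + 1) * π * w)‖ := by
  have hre : (π * I * (n + 1 / 2) ^ 2 * ω).re = -(π * √3 / 2) * (n + 1 / 2) ^ 2 := by
    rw [show π * I * (n + 1 / 2) ^ 2 * ω = ((π * (n + 1 / 2) ^ 2 : ℝ) : ℂ) * (I * ω) by
      push_cast; ring, re_ofReal_mul, I_mul_re, ω_im]
    ring
  rw [thetaSinTerm, norm_mul, norm_mul, norm_mul, Complex.norm_exp, hre, norm_pow, norm_neg,
    norm_one, one_pow, mul_one, Complex.norm_two]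

lemma two_mul_add_one_le_three_pow (n : ℕ) : (2 * n + 1 : ℝ) ≤ 3 ^ n := by
  induction n with
  | zero => norm_num
  | succ n ih =>
    push_cast
    rw [pow_succ]
    nlinarith [one_le_pow₀ (M₀ := ℝ) (a := 3) (by norm_num) (n := n)]

lemma norm_thetaSinTerm_le {w : ℂ} (hw : |w.im| ≤ √3 / 4) (n : ℕ) :
    ‖thetaSinTerm n w‖ ≤ ‖thetaSinTerm 0 w‖ * (3 * Real.exp (-2)) ^ n := by
  set t := π * √3 / 2 with ht_def
  have ht : 2 ≤ t := by
    have h3 : (4 / 3 : ℝ) ≤ √3 := Real.le_sqrt_of_sq_le (by norm_num)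
    nlinarith [Real.pi_gt_three]
  have him : |((π : ℂ) * w).im| = π * |w.im| := by
    rw [im_ofReal_mul, abs_mul, abs_of_pos Real.pi_pos]
  have hsin := norm_sin_two_mul_add_one_mul_le n (π * w)
  rw [him, ← mul_assoc] at hsin
  have hexp : Real.exp (-t * (n + 1 / 2) ^ 2) * Real.exp (2 * n * (π * |w.im|))
      ≤ Real.exp (-t * (0 + 1 / 2) ^ 2) * Real.exp (-2) ^ n := by
    rw [← Real.exp_nat_mul, ← Real.exp_add, ← Real.exp_add, Real.exp_le_exp]
    have hn : (n : ℝ) ≤ n ^ 2 := by exact_mod_cast Nat.le_self_pow two_ne_zero n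
    have hgrowth : 2 * n * (π * |w.im|) ≤ n * t := by
      nlinarith [mul_le_mul_of_nonneg_left hw (by positivity : (0 : ℝ) ≤ 2 * n * π)]
    have hdecay : 2 * (n : ℝ) ≤ t * n ^ 2 := by nlinarith
    nlinarith
  rw [norm_thetaSinTerm, norm_thetaSinTerm]
  push_cast
  calc 2 * Real.exp (-t * (n + 1 / 2) ^ 2) * ‖sin ((2 * n + 1) * π * w)‖
      ≤ 2 * (Real.exp (-t * (n + 1 / 2) ^ 2) * Real.exp (2 * n * (π * |w.im|)))
          * (2 * n + 1) * ‖sin (π * w)‖ := by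
        nlinarith [Real.exp_pos (-t * (n + 1 / 2) ^ 2)]
    _ ≤ 2 * (Real.exp (-t * (0 + 1 / 2) ^ 2) * Real.exp (-2) ^ n) * 3 ^ n * ‖sin (π * w)‖ := by
        gcongr
        exact two_mul_add_one_le_three_pow n
    _ = 2 * Real.exp (-t * (0 + 1 / 2) ^ 2) * ‖sin ((2 * 0 + 1) * π * w)‖
          * (3 * Real.exp (-2)) ^ n := by
        rw [mul_pow]
        ring_nf

lemma three_mul_exp_neg_two_lt : 3 * Real.exp (-2) < 1 / 2 := by
  have he : 6 < Real.exp 2 := by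
    have := Real.exp_one_gt_d9
    rw [show (2 : ℝ) = 1 + 1 by norm_num, Real.exp_add]
    nlinarith
  rw [Real.exp_neg]
  have := Real.exp_pos 2
  rw [← div_eq_mul_inv, div_lt_iff₀ this]
  linarith

lemma theta_ne_zero_of_abs_im_le {w : ℂ} (hw : |w.im| ≤ √3 / 4) (hsin : sin (π * w) ≠ 0) :
    θ w ≠ 0 := by
  rw [theta_eq_tsum_thetaSinTerm]
  refine tsum_ne_zero_of_norm_le_geometric (by positivity) three_mul_exp_neg_two_lt
    (norm_thetaSinTerm_le hw) ?_
  simpa [thetaSinTerm] using hsin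

lemma theta_ne_zero {z : ℂ} (hz : ¬ inΛ z) : θ z ≠ 0 := by
  set n : ℤ := round (z.im / (√3 / 2))
  set w : ℂ := z - n * ω with hw
  have hw_im : |w.im| ≤ √3 / 4 := by
    have hround : |z.im / (√3 / 2) - n| ≤ 1 / 2 := abs_sub_round _
    have h3 : 0 < √3 / 2 := by positivity
    rw [hw, sub_im, ← ofReal_intCast, im_ofReal_mul, ω_im,
      show z.im - n * (√3 / 2) = (z.im / (√3 / 2) - n) * (√3 / 2) by field_simp, abs_mul,
      abs_of_pos h3]
    nlinarith
  have hsin : sin (π * w) ≠ 0 := by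
    intro h
    obtain ⟨j, hj⟩ := Complex.sin_eq_zero_iff.mp h
    refine hz ⟨n, j, ?_⟩
    have hwj : w = j := mul_left_cancel₀ (ofReal_ne_zero.mpr Real.pi_ne_zero) (by rw [hj]; ring)
    rw [← hwj, hw]
    ring
  have hθ := theta_eq_latticeFactor_mul 0 n w
  rw [Int.cast_zero, add_zero, hw, sub_add_cancel] at hθ
  exact right_ne_zero_of_mul (hθ ▸ theta_ne_zero_of_abs_im_le hw_im hsin)

lemma zmap_add (k p : ℂ) : zmap (k + p) = zmap k + zmap p := by
  simp only [zmap]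
  ring

lemma re_eq_of_zmap_eq {p : ℂ} {m n : ℝ} (h : zmap p = m + n * ω) : p.re = -2 * π * n := by
  have hp : p = 4 * π * I / √3 * (m + n * ω) := by
    rw [← h, zmap]
    field_simp
  rw [hp]
  simp only [mul_re, mul_im, add_re, add_im, div_ofReal_re, div_ofReal_im, ofReal_re, ofReal_im,
    re_ofNat, im_ofNat, I_re, I_im, ω_re, ω_im]
  field_simp
  ring

lemma neg_I_mul_pairing_eq {z p : ℂ} {n : ℝ} (hp : p.re = -2 * π * n) :
    -I * (pairing z p : ℂ) = I / 2 * (z - conj z) * p + 2 * π * I * n * z := by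
  have hconj : conj p = -p - 4 * π * n := by
    have h := Complex.add_conj p
    rw [hp] at h
    push_cast at h
    linear_combination h
  have hpair : (pairing z p : ℂ) = (z * conj p + conj z * p) / 2 := by
    rw [pairing, Complex.re_eq_add_conj, map_mul, Complex.conj_conj]
  rw [hpair, hconj]
  ring

lemma theta_div_theta_zmap_add {p k : ℂ} {m n : ℤ} (hmn : zmap p = m + n * ω)
    (hk : ¬ inΛ (zmap k)) : θ (zmap k) / θ (zmap (k + p)) = latticeFactor m n (zmap k) := by
  have hθ := theta_eq_latticeFactor_mul m n (zmap k)
  rw [add_assoc, ← hmn, ← zmap_add] at hθ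
  refine div_eq_of_eq_mul (fun h ↦ theta_ne_zero hk ?_) hθ
  rw [hθ, h, mul_zero]

lemma F_add {p : ℂ} {m n : ℤ} (hmn : zmap p = m + n * ω) (k z : ℂ) :
    F (k + p) z = (latticeFactor m n (zmap k))⁻¹ * cexp (-I * (pairing z p : ℂ)) * F k z := by
  have hshift : zmap (k + p) = zmap k + m + n * ω := by rw [zmap_add, hmn, add_assoc]
  have hθ := theta_eq_latticeFactor_mul m n (z - zmap (k + p))
  rw [hshift, show z - (zmap k + m + n * ω) + m + n * ω = z - zmap k by ring] at hθ
  have hL : latticeFactor m n (z - (zmap k + m + n * ω))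
      = (latticeFactor m n (zmap k))⁻¹ * cexp (2 * π * I * n * z) := by
    rw [eq_inv_mul_iff_mul_eq₀ (latticeFactor_ne_zero _ _ _), mul_comm,
      latticeFactor_mul_latticeFactor]
    ring_nf
  have hre := re_eq_of_zmap_eq (p := p) (m := m) (n := n) (by exact_mod_cast hmn)
  rw [F, F, hshift, hθ, hL, neg_I_mul_pairing_eq hre, mul_add, Complex.exp_add, Complex.exp_add]
  push_cast
  ring

theorem stmt5_general (p : ℂ) (m n : ℤ) (hmn : zmap p = (m : ℂ) + (n : ℂ) * ω)
    (k : ℂ) (hk : ¬ inΛ (zmap k)) :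
    θ (zmap k) / θ (zmap (k + p))
        = (-1 : ℂ) ^ (m + n) *
          Complex.exp ((Real.pi : ℂ) * Complex.I * (n : ℂ)^2 * ω
            + 2 * (Real.pi : ℂ) * Complex.I * (n : ℂ) * zmap k) ∧
    ∀ z : ℂ, ¬ inΛ z →
      F (k + p) z = (θ (zmap k) / θ (zmap (k + p)))⁻¹
          * Complex.exp (-Complex.I * (pairing z p : ℂ)) * F k z := by
  have hratio := theta_div_theta_zmap_add hmn hk
  exact ⟨hratio, fun z _ ↦ hratio ▸ F_add hmn k z⟩

theorem stmt5 (p : ℂ) (hp : inΛstar p) (m n : ℤ) (hmn : zmap p = (m : ℂ) + (n : ℂ) * ω)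
    (k : ℂ) (hk : ¬ inΛ (zmap k)) :
    θ (zmap k) / θ (zmap (k + p))
        = (-1 : ℂ) ^ (m + n) *
          Complex.exp ((Real.pi : ℂ) * Complex.I * (n : ℂ)^2 * ω
            + 2 * (Real.pi : ℂ) * Complex.I * (n : ℂ) * zmap k) ∧
    ∀ z : ℂ, ¬ inΛ z →
      F (k + p) z = (θ (zmap k) / θ (zmap (k + p)))⁻¹
          * Complex.exp (-Complex.I * (pairing z p : ℂ)) * F k z :=
  stmt5_general p m n hmn k hk

end
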